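/- Let π ∈ S_{m,n} be decreasing, i.e. π(1) > π(2) > … > π(m). Then E_π is the linear subspace E_π = {(X,Y) ∈ Mat_{m×n}(ℂ) × Mat_{n×m}(ℂ) : X_{ij} = 0 for all pairs (i,j) with j < π(i), and Y_{ji} = 0 for all pairs (i,j) with j > π(i)}; in particular E_π is a linear subspace of dimension m(n+1). -/

import Mathlib

open Matrix

/-- The ambient space `Mat(m,n,ℂ) × Mat(n,m,ℂ)`. -/
abbrev LUSpace (m n : ℕ) := Matrix (Fin m) (Fin n) ℂ × Matrix (Fin n) (Fin m) ℂ

/-- Lower triangular square matrix. -/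
def LowerTri {k : ℕ} (M : Matrix (Fin k) (Fin k) ℂ) : Prop := ∀ i j : Fin k, i < j → M i j = 0

/-- Upper triangular square matrix. -/
def UpperTri {k : ℕ} (M : Matrix (Fin k) (Fin k) ℂ) : Prop := ∀ i j : Fin k, j < i → M i j = 0

/-- The lower-upper scheme `E`. -/
def LU (m n : ℕ) : Set (LUSpace m n) :=
  { p | LowerTri (p.1 * p.2) ∧ UpperTri (p.2 * p.1) }

/-- The partial permutation matrix associated to `π ∈ S_{m,n}`. -/
def permMat {m n : ℕ} (π : Fin m ↪ Fin n) : Matrix (Fin m) (Fin n) ℂ :=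
  fun i j => if π i = j then 1 else 0

/-- Invertible lower triangular m×m matrices. -/
def Bminus (m : ℕ) : Set (Matrix (Fin m) (Fin m) ℂ) := { b | IsUnit b ∧ LowerTri b }

/-- Invertible upper triangular n×n matrices. -/
def Bplus (n : ℕ) : Set (Matrix (Fin n) (Fin n) ℂ) := { c | IsUnit c ∧ UpperTri c }

/-- Lower unitriangular m×m matrices. -/
def Nminus (m : ℕ) : Set (Matrix (Fin m) (Fin m) ℂ) := { b | LowerTri b ∧ ∀ i, b i i = 1 }

/-- Upper unitriangular n×n matrices. -/
def Nplus (n : ℕ) : Set (Matrix (Fin n) (Fin n) ℂ) := { c | UpperTri c ∧ ∀ j, c j j = 1 }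

/-- `E°_π`. -/
def Eopen {m n : ℕ} (π : Fin m ↪ Fin n) : Set (LUSpace m n) :=
  { p | ∃ b ∈ Nminus m, ∃ c ∈ Nplus n, ∃ s t : Fin m → ℂ,
      (∀ i, s i * t i ≠ 0) ∧ (∀ i i' : Fin m, i ≠ i' → s i * t i ≠ s i' * t i') ∧
      p.1 = b * (Matrix.diagonal s * permMat π) * c⁻¹ ∧
      p.2 = c * ((permMat π)ᵀ * Matrix.diagonal t) * b⁻¹ }

/-- Coordinates of a point of `LUSpace` as a function on the variable-index type. -/
def coordsOf {m n : ℕ} (p : LUSpace m n) : (Fin m × Fin n) ⊕ (Fin n × Fin m) → ℂ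
  | .inl ij => p.1 ij.1 ij.2
  | .inr ji => p.2 ji.1 ji.2

/-- Zariski closure of a subset of `LUSpace m n`: the common zero set of all polynomials
vanishing identically on the subset. -/
def zclosure {m n : ℕ} (S : Set (LUSpace m n)) : Set (LUSpace m n) :=
  { p | ∀ f : MvPolynomial ((Fin m × Fin n) ⊕ (Fin n × Fin m)) ℂ,
      (∀ q ∈ S, MvPolynomial.eval (coordsOf q) f = 0) → MvPolynomial.eval (coordsOf p) f = 0 }

/-- `E_π`, the Zariski closure of `E°_π`. -/
def Ecomp {m n : ℕ} (π : Fin m ↪ Fin n) : Set (LUSpace m n) := zclosure (Eopen π)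

/-- Zariski closure in the matrix space `Mat(m,n,ℂ)`. -/
def mzclosure {m n : ℕ} (S : Set (Matrix (Fin m) (Fin n) ℂ)) : Set (Matrix (Fin m) (Fin n) ℂ) :=
  { X | ∀ f : MvPolynomial (Fin m × Fin n) ℂ,
      (∀ Y ∈ S, MvPolynomial.eval (fun ij => Y ij.1 ij.2) f = 0) →
        MvPolynomial.eval (fun ij => X ij.1 ij.2) f = 0 }

/-- The linear subspace `{(X,Y) : X_{ij} = 0 for j < π(i), Y_{ji} = 0 for j > π(i)}`. -/
noncomputable def linSubspace {m n : ℕ} (π : Fin m ↪ Fin n) : Submodule ℂ (LUSpace m n) where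
  carrier := { p | (∀ (i : Fin m) (j : Fin n), j < π i → p.1 i j = 0) ∧
      (∀ (i : Fin m) (j : Fin n), π i < j → p.2 j i = 0) }
  add_mem' := by
    rintro a b ⟨ha1, ha2⟩ ⟨hb1, hb2⟩
    constructor
    · intro i j h
      show a.1 i j + b.1 i j = 0
      rw [ha1 i j h, hb1 i j h, add_zero]
    · intro i j h
      show a.2 j i + b.2 j i = 0
      rw [ha2 i j h, hb2 i j h, add_zero]
  zero_mem' := ⟨fun _ _ _ => rfl, fun _ _ _ => rfl⟩
  smul_mem' := by
    rintro c a ⟨ha1, ha2⟩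
    constructor
    · intro i j h
      show c * a.1 i j = 0
      rw [ha1 i j h, mul_zero]
    · intro i j h
      show c * a.2 j i = 0
      rw [ha2 i j h, mul_zero]

/-!
For decreasing `π` the action of `N₋ × N₊` preserves the coordinate subspace `L` cut out by the
stated equations, so `E°_π ⊆ L` and hence `E_π ⊆ L`. Conversely, if `(X, Y) ∈ L` has pivots
`dᵢ = X_{i,π(i)} Y_{π(i),i}` nonzero and pairwise distinct, then `XY` is lower triangular with
diagonal `d`, so a lower unitriangular `b` diagonalises it, and an explicit upper unitriangular
`c` brings `(b⁻¹X, Yb)` to the normal form `(sπ, πᵀt)`; thus `(X, Y) ∈ E°_π`. These generic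
points are where a polynomial `g` that does not vanish identically on `L` is nonzero, and as `L`
is an affine space, a polynomial vanishing on `L ∩ {g ≠ 0}` vanishes on `L`. Finally `L` is
spanned by `n - π(i)` coordinates in row `i` of `X` and `π(i) + 1` in column `i` of `Y`.
-/

namespace Matrix

variable {ι R K : Type*} [Fintype ι]

theorem BlockTriangular.nonsing_inv {α : Type*} [LinearOrder α] [DecidableEq ι] [CommRing R]
    {b : ι → α} {M : Matrix ι ι R} (hM : M.BlockTriangular b) : M⁻¹.BlockTriangular b := by
  by_cases h : IsUnit M.det
  · have := M.invertibleOfIsUnitDet h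
    exact blockTriangular_inv_of_blockTriangular hM
  · rw [nonsing_inv_apply_not_isUnit M h]
    exact blockTriangular_zero

variable [LinearOrder ι]

theorem IsUpperTriangular.mul_apply_self [NonUnitalNonAssocSemiring R] {M N : Matrix ι ι R}
    (hM : M.IsUpperTriangular) (hN : N.IsUpperTriangular) (i : ι) : (M * N) i i = M i i * N i i := by
  rw [mul_apply, Finset.sum_eq_single i]
  · intro k _ hk
    rcases hk.lt_or_gt with h | h
    · rw [hM h, zero_mul]
    · rw [hN h, mul_zero]
  · simp

theorem IsLowerTriangular.mulVec_apply_of_forall_lt [NonUnitalNonAssocSemiring R]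
    {M : Matrix ι ι R} (hM : M.IsLowerTriangular) {w : ι → R} {j : ι} (hw : ∀ k < j, w k = 0) :
    (M *ᵥ w) j = M j j * w j := by
  rw [mulVec, dotProduct, Finset.sum_eq_single j]
  · intro k _ hk
    rcases hk.lt_or_gt with h | h
    · rw [hw k h, mul_zero]
    · rw [hM (OrderDual.toDual_lt_toDual.2 h), zero_mul]
  · simp

variable [Field K]

/-- The eigenvector is a kernel vector of the singular triangular matrix `A - A i i`: its first
nonzero entry must sit where the diagonal of `A - A i i` vanishes, i.e. at `i`. -/
theorem IsLowerTriangular.exists_eigenvector [DecidableEq ι] {A : Matrix ι ι K}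
    (hA : A.IsLowerTriangular) {i : ι} (hi : ∀ k ≠ i, A k k ≠ A i i) :
    ∃ v : ι → K, A *ᵥ v = A i i • v ∧ v i = 1 ∧ ∀ k < i, v k = 0 := by
  set M := A - diagonal fun _ => A i i
  have hM : M.IsLowerTriangular := hA.sub (blockTriangular_diagonal _)
  have hdet : M.det = 0 := by
    rw [det_of_isLowerTriangular M hM]
    exact Finset.prod_eq_zero (Finset.mem_univ i) (by simp [M])
  obtain ⟨w, hw0, hMw⟩ := exists_mulVec_eq_zero_iff.2 hdet
  obtain ⟨k₀, hk₀, hlt⟩ : ∃ k₀, w k₀ ≠ 0 ∧ ∀ k < k₀, w k = 0 := by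
    obtain ⟨k₀, hk₀, hmin⟩ := wellFounded_lt.has_min {k | w k ≠ 0} (Function.ne_iff.1 hw0)
    exact ⟨k₀, hk₀, fun k hk => not_not.1 fun h => hmin k h hk⟩
  have hk₀i : k₀ = i := by
    by_contra h
    have hrow := congr_fun hMw k₀
    rw [hM.mulVec_apply_of_forall_lt hlt] at hrow
    simp only [M, sub_apply, diagonal_apply_eq, Pi.zero_apply, mul_eq_zero, sub_eq_zero] at hrow
    exact hrow.elim (hi k₀ h) hk₀
  subst hk₀i
  refine ⟨(w k₀)⁻¹ • w, ?_, by simp [hk₀], fun k hk => by simp [hlt k hk]⟩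
  have hAw : A *ᵥ w = A k₀ k₀ • w := by
    ext k
    have hk := congr_fun hMw k
    simp only [M, sub_mulVec, Pi.sub_apply, mulVec_diagonal, Pi.zero_apply, sub_eq_zero] at hk
    simpa [mul_comm] using hk
  rw [mulVec_smul, hAw, smul_comm]

theorem IsLowerTriangular.exists_unitriangular_mul_diagonal [DecidableEq ι] {A : Matrix ι ι K}
    (hA : A.IsLowerTriangular) (hd : Function.Injective A.diag) :
    ∃ b : Matrix ι ι K, b.IsLowerTriangular ∧ (∀ i, b i i = 1) ∧
      A * b = b * diagonal A.diag := by
  choose v hv using fun i => hA.exists_eigenvector fun k hk => hd.ne hk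
  refine ⟨of fun k i => v i k, fun k i hki => (hv i).2.2 k hki, fun i => (hv i).2.1, ?_⟩
  ext k i
  rw [mul_diagonal, of_apply, mul_comm]
  exact congr_fun (hv i).1 k

end Matrix

namespace MvPolynomial

variable {σ K : Type*} [Field K] [Infinite K] {s : Set σ}

/-- Substituting `0` for the variables outside `s` turns the hypothesis into the vanishing of the
product of two polynomials, one of which is nonzero. -/
theorem eval_eq_zero_of_eval_ne_zero_imp {f g : MvPolynomial σ K}
    (hf : ∀ x : σ → K, (∀ v ∉ s, x v = 0) → eval x g ≠ 0 → eval x f = 0)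
    (hg : ∃ x : σ → K, (∀ v ∉ s, x v = 0) ∧ eval x g ≠ 0)
    {x : σ → K} (hx : ∀ v ∉ s, x v = 0) : eval x f = 0 := by
  classical
  set φ := bind₁ fun v => if v ∈ s then (X v : MvPolynomial σ K) else 0
  have heval : ∀ (h : MvPolynomial σ K) (y : σ → K),
      eval y (φ h) = eval (fun v => if v ∈ s then y v else 0) h := by
    intro h y
    refine (eval₂Hom_bind₁ _ _ _ h).trans (congrArg (fun z => eval z h) (_root_.funext fun v => ?_))
    split_ifs <;> simp
  have hrestrict : ∀ y : σ → K, ∀ v ∉ s, (if v ∈ s then y v else 0) = 0 := fun y v hv => if_neg hv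
  have hfix : ∀ y : σ → K, (∀ v ∉ s, y v = 0) → (fun v => if v ∈ s then y v else 0) = y :=
    fun y hy => _root_.funext fun v => by split_ifs with hv <;> simp [hy, hv]
  have hfg : φ f * φ g = 0 := by
    refine MvPolynomial.funext fun y => ?_
    rw [← map_mul, heval, map_mul, map_zero]
    by_cases hgy : eval (fun v => if v ∈ s then y v else 0) g = 0
    · rw [hgy, mul_zero]
    · rw [hf _ (hrestrict y) hgy, zero_mul]
  have hφg : φ g ≠ 0 := by
    obtain ⟨x₀, hx₀, hgx₀⟩ := hg
    intro h
    rw [← hfix x₀ hx₀, ← heval, h, map_zero] at hgx₀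
    exact hgx₀ rfl
  rw [← hfix x hx, ← heval, (mul_eq_zero.1 hfg).resolve_right hφg, map_zero]

end MvPolynomial

theorem prod_mul_prod_offDiag_sub_ne_zero_iff {ι K : Type*} [Fintype ι] [DecidableEq ι] [Field K]
    (d : ι → K) :
    (∏ i, d i) * ∏ q ∈ Finset.univ.offDiag, (d q.1 - d q.2) ≠ 0 ↔
      (∀ i, d i ≠ 0) ∧ Function.Injective d := by
  simp [Finset.prod_ne_zero_iff, sub_eq_zero, Function.Injective, not_imp_not]

theorem Module.finrank_iInf_ker_proj {ι K : Type*} [Fintype ι] [Field K] (s : Set ι) :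
    Module.finrank K
      ↥(⨅ v ∈ sᶜ, LinearMap.ker (LinearMap.proj v : (ι → K) →ₗ[K] K) : Submodule K (ι → K)) =
      Nat.card s := by
  classical
  rw [(LinearMap.iInfKerProjEquiv K (fun _ => K) disjoint_compl_right (by simp)).finrank_eq,
    Module.finrank_fintype_fun_eq_card, Nat.card_eq_fintype_card]

section Unitriangular

variable {k : ℕ}

theorem isUnit_det_of_mem_nminus {b : Matrix (Fin k) (Fin k) ℂ} (hb : b ∈ Nminus k) :
    IsUnit b.det := by
  rw [det_of_isLowerTriangular b hb.1]
  simp [hb.2]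

theorem isUnit_det_of_mem_nplus {c : Matrix (Fin k) (Fin k) ℂ} (hc : c ∈ Nplus k) :
    IsUnit c.det := by
  rw [det_of_isUpperTriangular hc.1]
  simp [hc.2]

end Unitriangular

section LinSubspace

variable {m n : ℕ} {π : Fin m ↪ Fin n}

theorem permMat_mul_transpose (π : Fin m ↪ Fin n) : permMat π * (permMat π)ᵀ = 1 := by
  ext i i'
  simp [permMat, mul_apply, one_apply, π.injective.eq_iff]

theorem diagonal_mul_permMat_mem_linSubspace (s t : Fin m → ℂ) :
    (diagonal s * permMat π, (permMat π)ᵀ * diagonal t) ∈ linSubspace π := by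
  constructor
  · intro i j hj
    simp [permMat, hj.ne']
  · intro i j hj
    simp [permMat, hj.ne]

theorem permMat_mem_linSubspace : (permMat π, (permMat π)ᵀ) ∈ linSubspace π := by
  simpa using diagonal_mul_permMat_mem_linSubspace (π := π) 1 1

/-- The products `X_{i,π(i)} Y_{π(i),i}`, i.e. `st` for the points `(sπ, πᵀt)` defining `E°_π`. -/
def pivots (π : Fin m ↪ Fin n) (p : LUSpace m n) (i : Fin m) : ℂ := p.1 i (π i) * p.2 (π i) i

theorem pivots_diagonal_mul_permMat (s t : Fin m → ℂ) :
    pivots π (diagonal s * permMat π, (permMat π)ᵀ * diagonal t) = s * t := by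
  ext i
  simp [pivots, permMat]

variable {p q : LUSpace m n}

theorem mul_apply_self_of_mem_linSubspace (hp : p ∈ linSubspace π) (i : Fin m) :
    (p.1 * p.2) i i = pivots π p i := by
  rw [mul_apply, Finset.sum_eq_single (π i) _ (by simp)]
  · rfl
  · intro j _ hj
    rcases hj.lt_or_gt with h | h
    · rw [hp.1 i j h, zero_mul]
    · rw [hp.2 i j h, mul_zero]

theorem isLowerTriangular_mul_of_mem_linSubspace (hπ : StrictAnti π) (hp : p ∈ linSubspace π) :
    (p.1 * p.2).IsLowerTriangular := by
  intro i i' h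
  rw [mul_apply]
  refine Finset.sum_eq_zero fun j _ => ?_
  rcases lt_or_ge j (π i) with hj | hj
  · rw [hp.1 i j hj, zero_mul]
  · rw [hp.2 i' j ((hπ (OrderDual.toDual_lt_toDual.1 h)).trans_le hj), mul_zero]

theorem mul_mem_linSubspace (hπ : StrictAnti π) (hp : p ∈ linSubspace π)
    {b b' : Matrix (Fin m) (Fin m) ℂ} {c c' : Matrix (Fin n) (Fin n) ℂ}
    (hb : b.IsLowerTriangular) (hc : c.IsUpperTriangular)
    (hc' : c'.IsUpperTriangular) (hb' : b'.IsLowerTriangular) :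
    (b * p.1 * c, c' * p.2 * b') ∈ linSubspace π := by
  constructor
  · intro i j hj
    change (b * p.1 * c) i j = 0
    rw [mul_apply]
    refine Finset.sum_eq_zero fun l _ => ?_
    rcases lt_or_ge j l with hl | hl
    · rw [hc hl, mul_zero]
    rw [mul_apply]
    refine mul_eq_zero_of_left (Finset.sum_eq_zero fun k _ => ?_) _
    rcases lt_or_ge i k with hk | hk
    · rw [hb (OrderDual.toDual_lt_toDual.2 hk), zero_mul]
    · rw [hp.1 k l (hl.trans_lt (hj.trans_le (hπ.antitone hk))), mul_zero]
  · intro i j hj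
    change (c' * p.2 * b') j i = 0
    rw [mul_apply]
    refine Finset.sum_eq_zero fun k _ => ?_
    rcases lt_or_ge k i with hk | hk
    · rw [hb' (OrderDual.toDual_lt_toDual.2 hk), mul_zero]
    rw [mul_apply]
    refine mul_eq_zero_of_left (Finset.sum_eq_zero fun l _ => ?_) _
    rcases lt_or_ge l j with hl | hl
    · rw [hc' hl, zero_mul]
    · rw [hp.2 k l (((hπ.antitone hk).trans_lt hj).trans_le hl), mul_zero]

theorem isUpperTriangular_mul_diagonal_mul (hp : p ∈ linSubspace π) (hq : q ∈ linSubspace π)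
    (e : Fin m → ℂ) : (q.2 * diagonal e * p.1).IsUpperTriangular := by
  intro l k hkl
  rw [mul_apply]
  refine Finset.sum_eq_zero fun i _ => ?_
  rw [mul_diagonal]
  rcases lt_or_ge (π i) l with hi | hi
  · rw [hq.2 i l hi, zero_mul, zero_mul]
  · rw [hp.1 i k (hkl.trans_le hi), mul_zero]

theorem mul_diagonal_mul_apply_self (hp : p ∈ linSubspace π) (hq : q ∈ linSubspace π)
    (e : Fin m → ℂ) (l : Fin n) :
    (q.2 * diagonal e * p.1) l l = ∑ i, if π i = l then q.2 l i * e i * p.1 i l else 0 := by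
  rw [mul_apply]
  refine Finset.sum_congr rfl fun i _ => ?_
  rw [mul_diagonal]
  split_ifs with hi
  · rfl
  rcases (Ne.symm hi).lt_or_gt with h | h
  · rw [hp.1 i l h, mul_zero]
  · rw [hq.2 i l h, zero_mul, zero_mul]

end LinSubspace

section UpperFactor

variable {m n : ℕ} {π : Fin m ↪ Fin n}

/-- When `XY = diag(d)`, this matrix `c` has column `Y_{·,i} / Y_{π(i),i}` at `π(i)` and a column
of `1 - Y d⁻¹ X`, which lies in `ker X`, elsewhere; hence `X c = sπ` and `c πᵀ t = Y`. -/
noncomputable def upperFactor (π : Fin m ↪ Fin n) (p : LUSpace m n) : Matrix (Fin n) (Fin n) ℂ :=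
  p.2 * diagonal (fun i => (p.2 (π i) i)⁻¹) * permMat π +
    (1 - p.2 * diagonal (pivots π p)⁻¹ * p.1) * (1 - (permMat π)ᵀ * permMat π)

variable {p : LUSpace m n} (hp : p ∈ linSubspace π)
  (hdiag : p.1 * p.2 = diagonal (pivots π p)) (h0 : ∀ i, pivots π p i ≠ 0)
include h0

include hdiag in
theorem mul_upperFactor :
    p.1 * upperFactor π p = diagonal (fun i => p.1 i (π i)) * permMat π := by
  have hd : diagonal (pivots π p) * diagonal (pivots π p)⁻¹ = 1 := by
    rw [diagonal_mul_diagonal, ← diagonal_one]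
    exact congrArg diagonal (funext fun i => mul_inv_cancel₀ (h0 i))
  have hs : diagonal (pivots π p) * diagonal (fun i => (p.2 (π i) i)⁻¹) =
      diagonal (fun i => p.1 i (π i)) := by
    rw [diagonal_mul_diagonal]
    exact congrArg diagonal (funext fun i => mul_inv_cancel_right₀ (right_ne_zero_of_mul (h0 i)) _)
  have hker : p.1 * (1 - p.2 * diagonal (pivots π p)⁻¹ * p.1) = 0 := by
    rw [Matrix.mul_sub, Matrix.mul_one, ← Matrix.mul_assoc, ← Matrix.mul_assoc, hdiag, hd,
      Matrix.one_mul, sub_self]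
  rw [upperFactor, Matrix.mul_add, ← Matrix.mul_assoc p.1 (1 - _), hker, Matrix.zero_mul, add_zero,
    ← Matrix.mul_assoc, ← Matrix.mul_assoc, hdiag, hs]

theorem upperFactor_mul :
    upperFactor π p * ((permMat π)ᵀ * diagonal (fun i => p.2 (π i) i)) = p.2 := by
  have hproj : (1 - (permMat π)ᵀ * permMat π) * (permMat π)ᵀ = 0 := by
    rw [Matrix.sub_mul, Matrix.one_mul, Matrix.mul_assoc, permMat_mul_transpose, Matrix.mul_one,
      sub_self]
  have ht : diagonal (fun i => (p.2 (π i) i)⁻¹) * diagonal (fun i => p.2 (π i) i) = 1 := by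
    rw [diagonal_mul_diagonal, ← diagonal_one]
    exact congrArg diagonal (funext fun i => inv_mul_cancel₀ (right_ne_zero_of_mul (h0 i)))
  rw [upperFactor, Matrix.add_mul, Matrix.mul_assoc (1 - _),
    ← Matrix.mul_assoc (1 - (permMat π)ᵀ * permMat π), hproj, Matrix.zero_mul, Matrix.mul_zero,
    add_zero, Matrix.mul_assoc (p.2 * _), ← Matrix.mul_assoc (permMat π), permMat_mul_transpose,
    Matrix.one_mul, Matrix.mul_assoc, ht, Matrix.mul_one]

include hp in
theorem upperFactor_mem_nplus : upperFactor π p ∈ Nplus n := by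
  have hP := permMat_mem_linSubspace (π := π)
  have hA := isUpperTriangular_mul_diagonal_mul hP hp fun i => (p.2 (π i) i)⁻¹
  have hN : (1 - p.2 * diagonal (pivots π p)⁻¹ * p.1).IsUpperTriangular :=
    blockTriangular_one.sub (isUpperTriangular_mul_diagonal_mul hp hp _)
  have hR : (1 - (permMat π)ᵀ * permMat π).IsUpperTriangular := by
    simpa using blockTriangular_one.sub (isUpperTriangular_mul_diagonal_mul hP hP 1)
  refine ⟨hA.add (hN.mul hR), fun l => ?_⟩
  rw [upperFactor, Matrix.add_apply, hN.mul_apply_self hR, Matrix.sub_apply, Matrix.sub_apply,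
    mul_diagonal_mul_apply_self hP hp, mul_diagonal_mul_apply_self hp hp]
  by_cases hl : ∃ i, π i = l
  · obtain ⟨i, rfl⟩ := hl
    simp [π.injective.eq_iff, permMat, mul_apply, right_ne_zero_of_mul (h0 i)]
  · rw [not_exists] at hl
    simp [hl, permMat, mul_apply]

end UpperFactor

section OpenCell

variable {m n : ℕ} {π : Fin m ↪ Fin n}

/-- A lower unitriangular `b` diagonalising `XY` moves `(X, Y)` to `(b⁻¹X, Yb)` with diagonal
product, which `upperFactor` then brings to the normal form `(sπ, πᵀt)`. -/
theorem mem_eopen_of_pivots (hπ : StrictAnti π) {p : LUSpace m n} (hp : p ∈ linSubspace π)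
    (h0 : ∀ i, pivots π p i ≠ 0) (hinj : Function.Injective (pivots π p)) : p ∈ Eopen π := by
  obtain ⟨X, Y⟩ := p
  have hdiagXY : (X * Y).diag = pivots π (X, Y) := funext (mul_apply_self_of_mem_linSubspace hp)
  obtain ⟨b, hbl, hb1, hXYb⟩ := (isLowerTriangular_mul_of_mem_linSubspace hπ hp)
    |>.exists_unitriangular_mul_diagonal (hdiagXY ▸ hinj)
  have hb : IsUnit b.det := isUnit_det_of_mem_nminus ⟨hbl, hb1⟩
  set p' : LUSpace m n := (b⁻¹ * X, Y * b)
  have hp' : p' ∈ linSubspace π := by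
    simpa using
      mul_mem_linSubspace hπ hp hbl.nonsing_inv blockTriangular_one blockTriangular_one hbl
  have hp'XY : p'.1 * p'.2 = diagonal (pivots π (X, Y)) := by
    rw [Matrix.mul_assoc, ← Matrix.mul_assoc X, hXYb, ← Matrix.mul_assoc, nonsing_inv_mul _ hb,
      Matrix.one_mul, hdiagXY]
  have hpiv : pivots π p' = pivots π (X, Y) := funext fun i => by
    rw [← mul_apply_self_of_mem_linSubspace hp', hp'XY, diagonal_apply_eq]
  rw [← hpiv] at h0 hinj hp'XY
  refine ⟨b, ⟨hbl, hb1⟩, upperFactor π p', upperFactor_mem_nplus hp' h0, _, _, h0,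
    fun i i' h => hinj.ne h, ?_, ?_⟩
  · rw [← mul_upperFactor hp'XY h0, ← Matrix.mul_assoc, mul_nonsing_inv_cancel_right _ _
      (isUnit_det_of_mem_nplus (upperFactor_mem_nplus hp' h0))]
    exact (mul_nonsing_inv_cancel_left _ _ hb).symm
  · rw [upperFactor_mul h0]
    exact (mul_nonsing_inv_cancel_right _ _ hb).symm

theorem eopen_subset_linSubspace (hπ : StrictAnti π) :
    Eopen π ⊆ (linSubspace π : Set (LUSpace m n)) := by
  rintro ⟨X, Y⟩ ⟨b, hb, c, hc, s, t, -, -, hX, hY⟩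
  obtain rfl : X = _ := hX
  obtain rfl : Y = _ := hY
  exact mul_mem_linSubspace hπ (diagonal_mul_permMat_mem_linSubspace s t) hb.1
    (BlockTriangular.nonsing_inv hc.1) hc.1 (BlockTriangular.nonsing_inv hb.1)

end OpenCell

section Coordinates

variable {m n : ℕ} {π : Fin m ↪ Fin n}

def linSupport (π : Fin m ↪ Fin n) : Set ((Fin m × Fin n) ⊕ (Fin n × Fin m))
  | .inl (i, j) => π i ≤ j
  | .inr (j, i) => j ≤ π i

@[simp]
theorem mem_linSupport_inl {i : Fin m} {j : Fin n} : .inl (i, j) ∈ linSupport π ↔ π i ≤ j := Iff.rfl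

@[simp]
theorem mem_linSupport_inr {i : Fin m} {j : Fin n} : .inr (j, i) ∈ linSupport π ↔ j ≤ π i := Iff.rfl

theorem mem_linSubspace_iff {p : LUSpace m n} :
    p ∈ linSubspace π ↔ ∀ v ∉ linSupport π, coordsOf p v = 0 := by
  constructor
  · rintro ⟨hX, hY⟩ (⟨i, j⟩ | ⟨j, i⟩) hv
    · exact hX i j (not_le.1 hv)
    · exact hY i j (not_le.1 hv)
  · intro h
    exact ⟨fun i j hj => h (.inl (i, j)) hj.not_ge, fun i j hj => h (.inr (j, i)) hj.not_ge⟩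

noncomputable def coordsEquiv : LUSpace m n ≃ₗ[ℂ] ((Fin m × Fin n) ⊕ (Fin n × Fin m) → ℂ) where
  toFun := coordsOf
  invFun x := (of fun i j => x (.inl (i, j)), of fun j i => x (.inr (j, i)))
  map_add' p q := by ext (_ | _) <;> rfl
  map_smul' c p := by ext (_ | _) <;> rfl
  left_inv p := rfl
  right_inv x := by ext (_ | _) <;> rfl

@[simp]
theorem coordsEquiv_apply (p : LUSpace m n) : coordsEquiv p = coordsOf p := rfl

theorem card_linSupport : Nat.card (linSupport π) = m * (n + 1) := by
  classical
  rw [Nat.card_eq_fintype_card, Fintype.card_subtype, Finset.card_filter, Fintype.sum_sum_type,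
    Fintype.sum_prod_type, Fintype.sum_prod_type_right, ← Finset.sum_add_distrib]
  have hrow : ∀ i : Fin m, ∀ j : Fin n, (if π i ≤ j then 1 else 0) + (if j ≤ π i then 1 else 0) =
      1 + if j = π i then 1 else 0 := by
    intro i j
    rcases lt_trichotomy j (π i) with h | rfl | h
    · simp [h.le, h.not_ge, h.ne]
    · simp
    · simp [h.le, h.not_ge, h.ne']
  simp only [mem_linSupport_inl, mem_linSupport_inr, ← Finset.sum_add_distrib, hrow]
  simp [Finset.sum_add_distrib]

end Coordinates

section Closure

open MvPolynomial

variable {m n : ℕ} {π : Fin m ↪ Fin n}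

noncomputable def genericPoly (π : Fin m ↪ Fin n) :
    MvPolynomial ((Fin m × Fin n) ⊕ (Fin n × Fin m)) ℂ :=
  let d i := X (.inl (i, π i)) * X (.inr (π i, i))
  (∏ i, d i) * ∏ q ∈ Finset.univ.offDiag, (d q.1 - d q.2)

theorem eval_genericPoly_ne_zero_iff {p : LUSpace m n} :
    eval (coordsOf p) (genericPoly π) ≠ 0 ↔
      (∀ i, pivots π p i ≠ 0) ∧ Function.Injective (pivots π p) := by
  rw [← prod_mul_prod_offDiag_sub_ne_zero_iff]
  simp [genericPoly, pivots, coordsOf]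

theorem ecomp_subset_linSubspace (hπ : StrictAnti π) :
    Ecomp π ⊆ (linSubspace π : Set (LUSpace m n)) := by
  intro p hp
  rw [SetLike.mem_coe, mem_linSubspace_iff]
  intro v hv
  simpa using hp (X v) fun q hq => by
    simpa using mem_linSubspace_iff.1 (eopen_subset_linSubspace hπ hq) v hv

theorem linSubspace_subset_ecomp (hπ : StrictAnti π) :
    (linSubspace π : Set (LUSpace m n)) ⊆ Ecomp π := by
  intro p hp f hf
  refine eval_eq_zero_of_eval_ne_zero_imp (g := genericPoly π) ?_ ?_ (mem_linSubspace_iff.1 hp)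
  · intro x hx hgx
    obtain ⟨q, rfl⟩ := coordsEquiv.surjective x
    obtain ⟨h0, hinj⟩ := eval_genericPoly_ne_zero_iff.1 hgx
    exact hf q (mem_eopen_of_pivots hπ (mem_linSubspace_iff.2 hx) h0 hinj)
  · refine ⟨coordsOf (diagonal (fun i : Fin m => ((i : ℕ) : ℂ) + 1) * permMat π,
      (permMat π)ᵀ * diagonal 1), mem_linSubspace_iff.1 (diagonal_mul_permMat_mem_linSubspace _ _),
      ?_⟩
    rw [eval_genericPoly_ne_zero_iff, pivots_diagonal_mul_permMat]
    refine ⟨fun i => by simpa using Nat.cast_add_one_ne_zero (i : ℕ), fun i i' h => ?_⟩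
    simpa [Fin.val_inj] using h

end Closure

theorem finrank_linSubspace {m n : ℕ} (π : Fin m ↪ Fin n) :
    Module.finrank ℂ (linSubspace π) = m * (n + 1) := by
  have hcoords : linSubspace π = (⨅ v ∈ (linSupport π)ᶜ, LinearMap.ker (LinearMap.proj v)).comap
      coordsEquiv.toLinearMap := by
    ext p
    simp [mem_linSubspace_iff, Submodule.mem_iInf]
  rw [hcoords, Submodule.comap_equiv_eq_map_symm, LinearEquiv.finrank_map_eq,
    Module.finrank_iInf_ker_proj, card_linSupport]

theorem Epi_decreasing_general (m n : ℕ) (π : Fin m ↪ Fin n)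
    (hdec : ∀ i i' : Fin m, i < i' → π i' < π i) :
    Ecomp π = (linSubspace π : Set (LUSpace m n)) ∧
    Module.finrank ℂ (linSubspace π) = m * (n + 1) :=
  ⟨(ecomp_subset_linSubspace hdec).antisymm (linSubspace_subset_ecomp hdec), finrank_linSubspace π⟩

/-- For decreasing `π`, `E_π` is the linear subspace cut out by `X_{ij} = 0` (`j < π(i)`) and
`Y_{ji} = 0` (`j > π(i)`), of dimension `m(n+1)`. -/
theorem Epi_decreasing (m n : ℕ) (hm : 1 ≤ m) (hmn : m ≤ n) (π : Fin m ↪ Fin n)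
    (hdec : ∀ i i' : Fin m, i < i' → π i' < π i) :
    Ecomp π = (linSubspace π : Set (LUSpace m n)) ∧
    Module.finrank ℂ (linSubspace π) = m * (n + 1) :=
  Epi_decreasing_general m n π hdec
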